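/- arXiv:1403.1247 — 7 statements merged into one kernel-verified Lean document; each statement's English description precedes it below -/
import Mathlib

section
/- Let S be a set of positive integers. Define the prime vertex graph Δ(S) with vertex set the primes dividing some element of S, where primes p and q are adjacent iff pq divides some element of S; and the common divisor graph Γ(S) with vertex set S \ {1}, where a and b are adjacent iff gcd(a,b) > 1. Then Δ(S) and Γ(S) have the same number of connected components. -/
/-!
Sending a prime to some element of `S` it divides, and an element `a ≠ 1` to its least prime
factor, maps edges to paths in both directions (an edge `pq ∣ a` of `Δ(S)` gives the path
through `a` in `Γ(S)`, an edge of `Γ(S)` gives the path through a common prime factor in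
`Δ(S)`), and both round trips stay inside a component. Hence the two maps induce mutually
inverse bijections of connected components.
-/

/-- The prime vertex graph Δ(S): vertices are primes dividing some element of `S`;
two primes are adjacent iff their product divides some element of `S`. -/
def primeVertexGraph (S : Set ℕ) :
    SimpleGraph {p : ℕ // p.Prime ∧ ∃ a ∈ S, p ∣ a} :=
  SimpleGraph.fromRel (fun p q => ∃ a ∈ S, p.1 * q.1 ∣ a)

/-- The common divisor graph Γ(S): vertices are elements of `S` other than `1`;
two vertices are adjacent iff their gcd exceeds `1`. -/
def commonDivisorGraph (S : Set ℕ) :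
    SimpleGraph {a : ℕ // a ∈ S ∧ a ≠ 1} :=
  SimpleGraph.fromRel (fun a b => 1 < Nat.gcd a.1 b.1)

namespace SimpleGraph

variable {V W : Type*} {G : SimpleGraph V} {H : SimpleGraph W}

theorem Reachable.map_of_forall_adj {f : V → W}
    (hf : ∀ u v, G.Adj u v → H.Reachable (f u) (f v)) {u v : V} (h : G.Reachable u v) :
    H.Reachable (f u) (f v) := by
  simp only [reachable_iff_reflTransGen] at hf h ⊢
  exact Relation.ReflTransGen.lift' f hf _ _ h

def ConnectedComponent.mapOfAdj (f : V → W)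
    (hf : ∀ u v, G.Adj u v → H.Reachable (f u) (f v)) :
    G.ConnectedComponent → H.ConnectedComponent :=
  ConnectedComponent.lift (fun v => H.connectedComponentMk (f v))
    fun _ _ p _ => ConnectedComponent.sound (p.reachable.map_of_forall_adj hf)

def ConnectedComponent.equivOfAdj (f : V → W) (g : W → V)
    (hf : ∀ u v, G.Adj u v → H.Reachable (f u) (f v))
    (hg : ∀ u v, H.Adj u v → G.Reachable (g u) (g v))
    (hgf : ∀ v, G.Reachable (g (f v)) v) (hfg : ∀ w, H.Reachable (f (g w)) w) :
    G.ConnectedComponent ≃ H.ConnectedComponent where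
  toFun := mapOfAdj f hf
  invFun := mapOfAdj g hg
  left_inv := ConnectedComponent.ind fun v => ConnectedComponent.sound (hgf v)
  right_inv := ConnectedComponent.ind fun w => ConnectedComponent.sound (hfg w)

end SimpleGraph

section

variable {S : Set ℕ}

theorem primeVertexGraph_reachable_of_dvd {p q : {p : ℕ // p.Prime ∧ ∃ a ∈ S, p ∣ a}} {a : ℕ}
    (ha : a ∈ S) (hp : p.1 ∣ a) (hq : q.1 ∣ a) : (primeVertexGraph S).Reachable p q := by
  by_cases hpq : p = q
  · exact hpq ▸ SimpleGraph.Reachable.refl p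
  have hcop : p.1.Coprime q.1 :=
    (Nat.coprime_primes p.2.1 q.2.1).mpr fun h => hpq (Subtype.ext h)
  exact SimpleGraph.Adj.reachable <| (SimpleGraph.fromRel_adj _ _ _).mpr
    ⟨hpq, Or.inl ⟨a, ha, hcop.mul_dvd_of_dvd_of_dvd hp hq⟩⟩

theorem commonDivisorGraph_reachable_of_dvd {a b : {a : ℕ // a ∈ S ∧ a ≠ 1}} {p : ℕ}
    (hp : p.Prime) (hpa : p ∣ a.1) (hpb : p ∣ b.1) : (commonDivisorGraph S).Reachable a b := by
  by_cases hab : a = b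
  · exact hab ▸ SimpleGraph.Reachable.refl a
  have hgcd : Nat.gcd a.1 b.1 ≠ 0 := fun h =>
    hab (Subtype.ext ((Nat.gcd_eq_zero_iff.mp h).1.trans (Nat.gcd_eq_zero_iff.mp h).2.symm))
  exact SimpleGraph.Adj.reachable <| (SimpleGraph.fromRel_adj _ _ _).mpr
    ⟨hab, Or.inl (hp.one_lt.trans_le (Nat.le_of_dvd (Nat.pos_of_ne_zero hgcd)
      (Nat.dvd_gcd hpa hpb)))⟩

theorem ne_one_of_prime_dvd {p a : ℕ} (hp : p.Prime) (hpa : p ∣ a) : a ≠ 1 :=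
  fun h => hp.not_dvd_one (h ▸ hpa)

noncomputable def primeVertexGraph.multiple (p : {p : ℕ // p.Prime ∧ ∃ a ∈ S, p ∣ a}) :
    {a : ℕ // a ∈ S ∧ a ≠ 1} :=
  ⟨p.2.2.choose, p.2.2.choose_spec.1, ne_one_of_prime_dvd p.2.1 p.2.2.choose_spec.2⟩

theorem primeVertexGraph.dvd_multiple (p : {p : ℕ // p.Prime ∧ ∃ a ∈ S, p ∣ a}) :
    p.1 ∣ (primeVertexGraph.multiple p).1 :=
  p.2.2.choose_spec.2

def commonDivisorGraph.minFac (a : {a : ℕ // a ∈ S ∧ a ≠ 1}) :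
    {p : ℕ // p.Prime ∧ ∃ a ∈ S, p ∣ a} :=
  ⟨a.1.minFac, Nat.minFac_prime a.2.2, a.1, a.2.1, Nat.minFac_dvd _⟩

theorem primeVertexGraph_adj_reachable_multiple (p q : {p : ℕ // p.Prime ∧ ∃ a ∈ S, p ∣ a})
    (h : (primeVertexGraph S).Adj p q) :
    (commonDivisorGraph S).Reachable (primeVertexGraph.multiple p)
      (primeVertexGraph.multiple q) := by
  obtain ⟨a, ha, hpq⟩ : ∃ a ∈ S, p.1 * q.1 ∣ a := by
    rcases ((SimpleGraph.fromRel_adj _ _ _).mp h).2 with h | ⟨a, ha, hqp⟩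
    · exact h
    · exact ⟨a, ha, mul_comm q.1 p.1 ▸ hqp⟩
  have hpa : p.1 ∣ a := dvd_of_mul_right_dvd hpq
  have hqa : q.1 ∣ a := dvd_of_mul_left_dvd hpq
  let av : {a : ℕ // a ∈ S ∧ a ≠ 1} := ⟨a, ha, ne_one_of_prime_dvd p.2.1 hpa⟩
  exact (commonDivisorGraph_reachable_of_dvd (b := av) p.2.1
      (primeVertexGraph.dvd_multiple p) hpa).trans
    (commonDivisorGraph_reachable_of_dvd q.2.1 hqa (primeVertexGraph.dvd_multiple q))

theorem commonDivisorGraph_adj_reachable_minFac (a b : {a : ℕ // a ∈ S ∧ a ≠ 1})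
    (h : (commonDivisorGraph S).Adj a b) :
    (primeVertexGraph S).Reachable (commonDivisorGraph.minFac a)
      (commonDivisorGraph.minFac b) := by
  have hgcd : Nat.gcd a.1 b.1 ≠ 1 := by
    rcases ((SimpleGraph.fromRel_adj _ _ _).mp h).2 with h | h
    · exact h.ne'
    · exact Nat.gcd_comm b.1 a.1 ▸ h.ne'
  have hra : (Nat.gcd a.1 b.1).minFac ∣ a.1 := (Nat.minFac_dvd _).trans (Nat.gcd_dvd_left _ _)
  have hrb : (Nat.gcd a.1 b.1).minFac ∣ b.1 := (Nat.minFac_dvd _).trans (Nat.gcd_dvd_right _ _)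
  let r : {p : ℕ // p.Prime ∧ ∃ a ∈ S, p ∣ a} := ⟨_, Nat.minFac_prime hgcd, a.1, a.2.1, hra⟩
  exact (primeVertexGraph_reachable_of_dvd (q := r) a.2.1 (Nat.minFac_dvd _) hra).trans
    (primeVertexGraph_reachable_of_dvd b.2.1 hrb (Nat.minFac_dvd _))

end

theorem stmt0_general (S : Set ℕ) :
    Cardinal.mk (primeVertexGraph S).ConnectedComponent =
      Cardinal.mk (commonDivisorGraph S).ConnectedComponent :=
  Cardinal.mk_congr <| SimpleGraph.ConnectedComponent.equivOfAdj
    primeVertexGraph.multiple commonDivisorGraph.minFac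
    primeVertexGraph_adj_reachable_multiple commonDivisorGraph_adj_reachable_minFac
    (fun p => primeVertexGraph_reachable_of_dvd (primeVertexGraph.multiple p).2.1
      (Nat.minFac_dvd _) (primeVertexGraph.dvd_multiple p))
    (fun a => commonDivisorGraph_reachable_of_dvd (commonDivisorGraph.minFac a).2.1
      (primeVertexGraph.dvd_multiple _) (Nat.minFac_dvd _))

/-- For a set `S` of positive integers, the prime vertex graph `Δ(S)` and the common
divisor graph `Γ(S)` have the same number of connected components. -/
theorem stmt0 (S : Set ℕ) (hS : ∀ a ∈ S, 0 < a) :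
    Cardinal.mk (primeVertexGraph S).ConnectedComponent =
      Cardinal.mk (commonDivisorGraph S).ConnectedComponent :=
  stmt0_general S
end

section
/- Let G be a finite group and p a prime. If p does not divide the size of any conjugacy class of G, then G has a Sylow p-subgroup contained in the center of G. -/
/-!
A Sylow `p`-subgroup `P` acts by conjugation on each conjugacy class, whose size is prime to `p`,
so the action has a fixed point: every element of `G` has a conjugate centralizing `P`.
A finite-index subgroup `C` meeting every conjugacy class is the whole group: its conjugates,
indexed by `G ⧸ C`, cover `G`, and the sum of their inverse indices is `1`, so by Neumann's lemma
they are pairwise disjoint, which is impossible for two of them since all contain `1`.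
Hence `C_G(P) = G`.
-/

open Subgroup
open scoped Pointwise

variable {G : Type*} [Group G]

instance conjClassMulAction (a : G) : MulAction G {b : G // IsConj a b} where
  smul g b := ⟨g * b * g⁻¹, b.2.trans (isConj_iff.2 ⟨g, rfl⟩)⟩
  one_smul b := by ext; simp [HSMul.hSMul]
  mul_smul g g' b := by
    ext
    simp only [HSMul.hSMul, mul_inv_rev]
    group

theorem exists_isConj_mem_centralizer_of_not_dvd {p : ℕ} [Fact p.Prime] {P : Subgroup G}
    (hP : IsPGroup p P) {a : G} (ha : ¬ p ∣ Nat.card {b : G // IsConj a b}) :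
    ∃ b ∈ centralizer (P : Set G), IsConj a b := by
  obtain ⟨b, hb⟩ := hP.nonempty_fixed_point_of_prime_not_dvd_card _ ha
  refine ⟨b, fun g hg => ?_, b.2⟩
  have hfix : g * b * g⁻¹ = b := congrArg Subtype.val (hb ⟨g, hg⟩)
  calc g * (b : G) = g * b * g⁻¹ * g := by group
    _ = b * g := by rw [hfix]

theorem eq_top_of_forall_exists_isConj_mem (C : Subgroup G) [C.FiniteIndex]
    (h : ∀ x : G, ∃ y ∈ C, IsConj x y) : C = ⊤ := by
  classical
  have := Fintype.ofFinite (G ⧸ C)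
  let H (q : G ⧸ C) : Subgroup G := C.map (MulAut.conj q.out : G →* G)
  have hindex (q : G ⧸ C) : (H q).index = C.index := index_map_equiv C _
  have hcover : ⋃ q ∈ Finset.univ, (1 : G) • (H q : Set G) = Set.univ := by
    refine Set.eq_univ_of_forall fun x => ?_
    obtain ⟨y, hy, hxy⟩ := h x
    obtain ⟨c, rfl⟩ := isConj_iff.1 hxy
    obtain ⟨k, hk⟩ := QuotientGroup.mk_out_eq_mul C c⁻¹
    refine Set.mem_biUnion (Finset.mem_univ (QuotientGroup.mk c⁻¹ : G ⧸ C)) ?_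
    rw [one_smul, SetLike.mem_coe]
    refine ⟨(k : G)⁻¹ * (c * x * c⁻¹) * k, C.mul_mem (C.mul_mem (C.inv_mem k.2) hy) k.2, ?_⟩
    simp only [hk, MonoidHom.coe_coe, MulAut.conj_apply]
    group
  have hsum : ∑ q, ((H q).index : ℚ)⁻¹ = 1 := by
    simp only [hindex, Finset.sum_const, Finset.card_univ, nsmul_eq_mul]
    rw [← Nat.card_eq_fintype_card, ← index_eq_card,
      mul_inv_cancel₀ (Nat.cast_ne_zero.2 FiniteIndex.index_ne_zero)]
  have hdisj := pairwiseDisjoint_leftCoset_cover_of_sum_inv_index_eq_one hcover hsum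
  have hfin (q : G ⧸ C) : q ∈ Finset.univ.filter fun q => (H q).FiniteIndex :=
    Finset.mem_filter.2 ⟨Finset.mem_univ q, ⟨hindex q ▸ FiniteIndex.index_ne_zero⟩⟩
  have hone (q : G ⧸ C) : (1 : G) ∈ (1 : G) • (H q : Set G) := by simp [one_mem]
  by_contra hC
  obtain ⟨x, hx⟩ := not_forall.1 ((eq_top_iff' C).not.1 hC)
  have hne : (QuotientGroup.mk 1 : G ⧸ C) ≠ QuotientGroup.mk x := by
    simpa [QuotientGroup.eq] using hx
  exact Set.disjoint_left.1 (hdisj (hfin _) (hfin _) hne) (hone _) (hone _)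

/-- If a prime `p` divides no conjugacy class size of a finite group `G`, then `G` has a
Sylow `p`-subgroup contained in the center of `G`. -/
theorem stmt2 (G : Type) [Group G] [Finite G] (p : ℕ) (hp : p.Prime)
    (h : ∀ a : G, ¬ p ∣ Nat.card {b : G // IsConj a b}) :
    ∃ P : Sylow p G, (P : Subgroup G) ≤ Subgroup.center G := by
  have : Fact p.Prime := ⟨hp⟩
  obtain ⟨P⟩ : Nonempty (Sylow p G) := inferInstance
  have hcent : centralizer (P : Set G) = ⊤ := eq_top_of_forall_exists_isConj_mem _ fun a =>
    exists_isConj_mem_centralizer_of_not_dvd P.isPGroup' (h a)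
  exact ⟨P, centralizer_eq_top_iff_subset.1 hcent⟩
end

section
/- Let G be a finite group that is a Frobenius group with abelian Frobenius kernel N of order n and abelian Frobenius complement H of order m. Then every nontrivial conjugacy class of G has size n or m; consequently cs(G) \ {1} ⊆ {n, m}. -/
/-!
A nontrivial element of the abelian complement `H` has centralizer exactly `H`, by
malnormality. Such an element `h` therefore acts fixed-point-freely on `N`, so
`x ↦ x⁻¹ (h x h⁻¹)` is a bijection of `N` and every element of the coset `N h` is conjugate
to `h`; hence every element outside `N` is conjugate into `H`, and a nontrivial element of
the abelian kernel `N` has centralizer exactly `N`. A class size is the index of a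
centralizer, and `|G : H| = |N|`, `|G : N| = |H|`.
-/

namespace Subgroup

variable {G : Type*} [Group G]

def IsMalnormal (H : Subgroup G) : Prop :=
  ∀ g : G, g ∉ H → H ⊓ H.map (MulAut.conj g).toMonoidHom = ⊥

theorem IsMalnormal.centralizer_le {H : Subgroup G} (hH : H.IsMalnormal) {x : G} (hx : x ∈ H)
    (hx1 : x ≠ 1) : centralizer {x} ≤ H := by
  intro c hc
  by_contra hcH
  have hconj : c * x * c⁻¹ = x := by
    rw [mul_inv_eq_iff_eq_mul]
    exact ((mem_centralizer_iff.mp hc) x rfl).symm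
  have hmem : x ∈ H ⊓ H.map (MulAut.conj c).toMonoidHom := ⟨hx, x, hx, hconj⟩
  rw [hH c hcH] at hmem
  exact hx1 hmem

theorem le_centralizer_singleton_of_mem {H : Subgroup G} [IsMulCommutative H] {x : G}
    (hx : x ∈ H) : H ≤ centralizer {x} :=
  le_trans (le_centralizer H) (centralizer_le (Set.singleton_subset_iff.mpr hx))

theorem IsMalnormal.centralizer_eq {H : Subgroup G} [IsMulCommutative H] (hH : H.IsMalnormal)
    {x : G} (hx : x ∈ H) (hx1 : x ≠ 1) : centralizer {x} = H :=
  (hH.centralizer_le hx hx1).antisymm (le_centralizer_singleton_of_mem hx)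

theorem nat_card_isConj_eq_index_centralizer (a : G) :
    Nat.card {b : G // IsConj a b} = (centralizer {a}).index := by
  have hindex : (centralizer {a}).index = (MulAction.stabilizer (ConjAct G) a).index :=
    (congrArg index (centralizer_eq_comap_stabilizer a)).trans
      (index_comap_of_surjective _ ConjAct.toConjAct.surjective)
  rw [hindex, MulAction.index_stabilizer, ← Nat.card_coe_set_eq]
  exact Nat.card_congr (Equiv.subtypeEquivRight fun b => by
    rw [ConjAct.mem_orbit_conjAct, isConj_comm])

theorem exists_conj_mul_eq_of_disjoint_centralizer {N : Subgroup G} [Finite N] (hN : N.Normal)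
    {h : G} (hdisj : Disjoint N (centralizer {h})) {n : G} (hn : n ∈ N) :
    ∃ y ∈ N, y * (n * h) * y⁻¹ = h := by
  let f : N → N := fun x => ⟨(x : G)⁻¹ * (h * x * h⁻¹),
    N.mul_mem (N.inv_mem x.2) (hN.conj_mem _ x.2 h)⟩
  have hf : Function.Injective f := by
    intro x y hxy
    have heq : (x : G)⁻¹ * (h * x * h⁻¹) = (y : G)⁻¹ * (h * y * h⁻¹) :=
      congrArg Subtype.val hxy
    have hcent : (y : G) * (x : G)⁻¹ ∈ centralizer {h} := by
      rw [mem_centralizer_singleton_iff]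
      calc (y : G) * (x : G)⁻¹ * h
          = y * ((x : G)⁻¹ * (h * x * h⁻¹)) * h * (x : G)⁻¹ := by group
        _ = y * ((y : G)⁻¹ * (h * y * h⁻¹)) * h * (x : G)⁻¹ := by rw [heq]
        _ = h * (y * (x : G)⁻¹) := by group
    have hone : (y : G) * (x : G)⁻¹ = 1 :=
      hdisj.le_bot ⟨N.mul_mem y.2 (N.inv_mem x.2), hcent⟩
    exact Subtype.ext (mul_inv_eq_one.mp hone).symm
  obtain ⟨y, hy⟩ := (Finite.injective_iff_surjective.mp hf) ⟨n, hn⟩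
  refine ⟨y, y.2, ?_⟩
  have hy' : (y : G)⁻¹ * (h * y * h⁻¹) = n := congrArg Subtype.val hy
  rw [← hy']
  group

theorem _root_.IsConj.index_centralizer_eq {a b : G} (hab : IsConj a b) :
    (centralizer {a}).index = (centralizer {b}).index := by
  rw [← nat_card_isConj_eq_index_centralizer, ← nat_card_isConj_eq_index_centralizer]
  exact Nat.card_congr (Equiv.subtypeEquivRight fun c => ⟨hab.symm.trans, hab.trans⟩)

variable {N H : Subgroup G} [Finite N]

theorem IsMalnormal.exists_mem_isConj_of_notMem (hH : H.IsMalnormal) (hN : N.Normal)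
    (hNH : IsComplement' N H) {g : G} (hg : g ∉ N) : ∃ h ∈ H, h ≠ 1 ∧ IsConj g h := by
  obtain ⟨⟨⟨n, hn⟩, ⟨h, hh⟩⟩, rfl⟩ := hNH.2 g
  have hh1 : h ≠ 1 := by
    rintro rfl
    exact hg (by simpa using hn)
  have hdisj : Disjoint N (centralizer {h}) := hNH.disjoint.mono_right (hH.centralizer_le hh hh1)
  obtain ⟨y, -, hy⟩ := exists_conj_mul_eq_of_disjoint_centralizer hN hdisj hn
  exact ⟨h, hh, hh1, isConj_iff.mpr ⟨y, hy⟩⟩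

theorem IsMalnormal.centralizer_eq_of_isComplement' [IsMulCommutative N] (hH : H.IsMalnormal)
    (hN : N.Normal) (hNH : IsComplement' N H) {b : G} (hb : b ∈ N) (hb1 : b ≠ 1) :
    centralizer {b} = N := by
  refine le_antisymm (fun c hc => ?_) (le_centralizer_singleton_of_mem hb)
  by_contra hcN
  obtain ⟨h, hh, hh1, hch⟩ := hH.exists_mem_isConj_of_notMem hN hNH hcN
  obtain ⟨y, rfl⟩ := isConj_iff.mp hch
  have hcomm : Commute (y * c * y⁻¹) (y * b * y⁻¹) := by
    simpa using Commute.map (mem_centralizer_singleton_iff.mp hc) (MulAut.conj y)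
  have hconj : y * b * y⁻¹ = 1 :=
    hNH.disjoint.le_bot ⟨hN.conj_mem b hb y,
      hH.centralizer_le hh hh1 (mem_centralizer_singleton_iff.mpr hcomm.symm)⟩
  exact hb1 (conj_eq_one_iff.mp hconj)

end Subgroup

theorem stmt6_general (G : Type) [Group G] [Finite G] (H N : Subgroup G)
    (hmal : ∀ g : G, g ∉ H → H ⊓ Subgroup.map (MulAut.conj g).toMonoidHom H = ⊥)
    (hNnormal : N.Normal)
    (hsup : N ⊔ H = ⊤) (hinf : N ⊓ H = ⊥)
    (hNab : IsMulCommutative N) (hHab : IsMulCommutative H) :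
    ∀ a : G, a ≠ 1 →
      Nat.card {b : G // IsConj a b} = Nat.card N ∨
      Nat.card {b : G // IsConj a b} = Nat.card H := by
  intro a ha
  have hH : H.IsMalnormal := hmal
  have hNH : Subgroup.IsComplement' N H := Subgroup.isComplement'_of_disjoint_and_mul_eq_univ
    (disjoint_iff.mpr hinf)
    (by rw [← @Subgroup.normal_mul _ _ N H hNnormal, hsup, Subgroup.coe_top])
  rw [Subgroup.nat_card_isConj_eq_index_centralizer]
  by_cases haN : a ∈ N
  · right
    rw [hH.centralizer_eq_of_isComplement' hNnormal hNH haN ha, hNH.symm.index_eq_card]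
  · left
    obtain ⟨h, hh, hh1, hah⟩ := hH.exists_mem_isConj_of_notMem hNnormal hNH haN
    rw [hah.index_centralizer_eq, hH.centralizer_eq hh hh1, hNH.index_eq_card]

/-- Let `G` be a finite Frobenius group with Frobenius complement `H` (a proper nontrivial
subgroup with `H ∩ gHg⁻¹ = 1` for `g ∉ H`) and abelian Frobenius kernel `N` (a normal
subgroup with `G = N ⋊ H` and `gcd(|N|,|H|) = 1`), with `H` also abelian.  Then every
nontrivial conjugacy class of `G` has size `|N| = n` or `|H| = m`. -/
theorem stmt6 (G : Type) [Group G] [Finite G] (H N : Subgroup G)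
    (hHbot : H ≠ ⊥) (hHtop : H ≠ ⊤)
    (hmal : ∀ g : G, g ∉ H → H ⊓ Subgroup.map (MulAut.conj g).toMonoidHom H = ⊥)
    (hNnormal : N.Normal)
    (hsup : N ⊔ H = ⊤) (hinf : N ⊓ H = ⊥)
    (hcoprime : Nat.Coprime (Nat.card N) (Nat.card H))
    (hNab : IsMulCommutative N) (hHab : IsMulCommutative H) :
    ∀ a : G, a ≠ 1 →
      Nat.card {b : G // IsConj a b} = Nat.card N ∨
      Nat.card {b : G // IsConj a b} = Nat.card H :=
  stmt6_general G H N hmal hNnormal hsup hinf hNab hHab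
end

section
/- Let F be a finite group, N a normal subgroup of F, and let ψ, χ be complex irreducible characters of F such that N ⊆ ker ψ and the restriction of χ to N is irreducible. Then the product character ψχ is an irreducible character of F. -/
/-!
As a representation of `N`, on which `ψ` is trivial, `ψ ⊗ χ` is a sum of `dim ψ` copies of the
irreducible `χ|_N`; by Schur's lemma every `N`-endomorphism of it is therefore `s ⊗ id` for some
linear `s`. If the endomorphism is `F`-equivariant, then `s` commutes with `ψ`, hence is a
scalar. So `End_F(ψ ⊗ χ)` is one-dimensional, which by Maschke's theorem means `ψ ⊗ χ` is
irreducible.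
-/

open CategoryTheory MonoidalCategory TensorProduct

namespace TensorProduct
variable {k V W : Type} [Field k] [AddCommGroup V] [Module k V] [AddCommGroup W] [Module k W]

lemma tmul_left_injective_of_ne_zero {y : W} (hy : y ≠ 0) :
    Function.Injective (· ⊗ₜ[k] y : V → V ⊗[k] W) := by
  obtain ⟨φ, hφ⟩ : ∃ φ : Module.Dual k W, φ y ≠ 0 := by
    by_contra! h
    exact hy ((Module.forall_dual_apply_eq_zero_iff k y).mp h)
  intro u v huv
  have := congr(TensorProduct.rid k V (φ.lTensor V $huv))
  simp only [LinearMap.lTensor_tmul, rid_tmul] at this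
  exact smul_right_injective V hφ this

end TensorProduct

namespace FDRep
variable {k G : Type} [Field k] [Monoid G]

lemma id_ne_zero_iff_nontrivial (V : FDRep k G) : 𝟙 V ≠ 0 ↔ Nontrivial V := by
  rw [← not_subsingleton_iff_nontrivial, not_iff_not]
  constructor
  · intro h
    refine ⟨fun x y => ?_⟩
    have hx : x = 0 := by simpa using congr(($h).hom.hom.hom x)
    have hy : y = 0 := by simpa using congr(($h).hom.hom.hom y)
    rw [hx, hy]
  · intro _
    ext x
    exact Subsingleton.elim _ _

lemma nontrivial_of_simple (V : FDRep k G) [Simple V] : Nontrivial V :=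
  (id_ne_zero_iff_nontrivial V).mp (id_nonzero V)

variable [IsAlgClosed k]

lemma exists_eq_smul_id_of_commute (V : FDRep k G) [Simple V]
    (u : V →ₗ[k] V) (hu : ∀ g, u ∘ₗ V.ρ g = V.ρ g ∘ₗ u) :
    ∃ c : k, u = c • LinearMap.id := by
  let f : V ⟶ V :=
    ⟨FGModuleCat.ofHom u, fun g => by ext x; exact LinearMap.congr_fun (hu g) x⟩
  obtain ⟨c, hc⟩ := endomorphism_simple_eq_smul_id k f
  exact ⟨c, congr(($hc).hom.hom.hom).symm⟩

section TrivialTensorSimple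
variable {V : Type} [AddCommGroup V] [Module k V] [FiniteDimensional k V] (W : FDRep k G) [Simple W]

lemma exists_eq_mk_of_commute (f : W →ₗ[k] V ⊗[k] W)
    (hf : ∀ g, f ∘ₗ W.ρ g = (W.ρ g).lTensor V ∘ₗ f) :
    ∃ v : V, f = TensorProduct.mk k V W v := by
  let b := Module.finBasis k V
  let e := equivFinsuppOfBasisLeft (N := W) b
  have he : ∀ i g, Finsupp.lapply i ∘ₗ e.toLinearMap ∘ₗ (W.ρ g).lTensor V =
      W.ρ g ∘ₗ Finsupp.lapply i ∘ₗ e.toLinearMap := by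
    intro i g
    ext v x
    simp [e]
  choose c hc using fun i =>
    exists_eq_smul_id_of_commute W (Finsupp.lapply i ∘ₗ e.toLinearMap ∘ₗ f) fun g => by
      ext x
      have h1 := congr($(he i g) (f x))
      have h2 := congr($(hf g) x)
      simp only [LinearMap.comp_apply] at h1 h2 ⊢
      rw [h2, h1]
  refine ⟨b.equivFun.symm c, LinearMap.ext fun x => e.injective (Finsupp.ext fun i => ?_)⟩
  rw [TensorProduct.mk_apply, equivFinsuppOfBasisLeft_apply_tmul_apply, ← b.equivFun_apply,
    b.equivFun.apply_symm_apply]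
  exact LinearMap.congr_fun (hc i) x

lemma exists_eq_rTensor_of_commute (T : V ⊗[k] W →ₗ[k] V ⊗[k] W)
    (hT : ∀ g, T ∘ₗ (W.ρ g).lTensor V = (W.ρ g).lTensor V ∘ₗ T) :
    ∃ s : V →ₗ[k] V, T = s.rTensor W := by
  choose v hv using fun a : V => exists_eq_mk_of_commute W (T ∘ₗ TensorProduct.mk k V W a)
    (fun g => by ext x; simpa using congr($(hT g) (a ⊗ₜ x)))
  let b := Module.finBasis k V
  refine ⟨b.constr k (v ∘ b), TensorProduct.ext (b.ext fun j => ?_)⟩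
  ext x
  have := congr($(hv (b j)) x)
  simp only [LinearMap.coe_comp, Function.comp_apply, mk_apply] at this
  simp [this, b.constr_basis]

end TrivialTensorSimple

lemma exists_tensor_end_eq_smul_id {F : Type} [Group F] (N : Subgroup F) (ψ χ : FDRep k F)
    [Simple ψ] (hker : ∀ n ∈ N, ψ.ρ n = 1) [Simple (FDRep.of (χ.ρ.comp N.subtype))]
    (T : ψ ⊗ χ ⟶ ψ ⊗ χ) : ∃ c : k, T = c • 𝟙 (ψ ⊗ χ) := by
  let t : ψ ⊗[k] χ →ₗ[k] ψ ⊗[k] χ := T.hom.hom.hom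
  have ht : ∀ g, t ∘ₗ map (ψ.ρ g) (χ.ρ g) = map (ψ.ρ g) (χ.ρ g) ∘ₗ t :=
    fun g => congr(($(T.comm g)).hom.hom)
  obtain ⟨s, hs⟩ : ∃ s : ψ →ₗ[k] ψ, t = s.rTensor χ :=
    exists_eq_rTensor_of_commute (FDRep.of (χ.ρ.comp N.subtype)) t fun n => by
      simpa [hker n n.2, Module.End.one_eq_id, LinearMap.lTensor] using ht n
  have : Nontrivial χ := nontrivial_of_simple (FDRep.of (χ.ρ.comp N.subtype))
  obtain ⟨x, hx⟩ := exists_ne (0 : χ)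
  obtain ⟨c, hc⟩ := exists_eq_smul_id_of_commute ψ s fun g => by
    have hgx : χ.ρ g x ≠ 0 :=
      (map_ne_zero_iff _ (Representation.apply_bijective χ.ρ g).1).mpr hx
    ext a
    refine tmul_left_injective_of_ne_zero (k := k) hgx ?_
    simpa [hs] using congr($(ht g) (a ⊗ₜ x))
  have htc : t = c • LinearMap.id := by
    rw [hs, hc, LinearMap.rTensor_smul, LinearMap.rTensor_id]
  refine ⟨c, ?_⟩
  ext z
  exact congr($htc z)

end FDRep

theorem stmt7_general (F : Type) [Group F] [Finite F] (N : Subgroup F)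
    (ψ χ : FDRep ℂ F) (hψ : Simple ψ)
    (hker : ∀ n : F, n ∈ N → ψ.ρ n = 1)
    (hres : Simple (FDRep.of (χ.ρ.comp N.subtype))) :
    Simple (ψ ⊗ χ) := by
  have : NeZero (Nat.card F : ℂ) := ⟨Nat.cast_ne_zero.mpr Nat.card_pos.ne'⟩
  have : Nontrivial χ := FDRep.nontrivial_of_simple (FDRep.of (χ.ρ.comp N.subtype))
  have hid : 𝟙 (ψ ⊗ χ) ≠ 0 := (FDRep.id_ne_zero_iff_nontrivial _).mpr
    ((Module.FaithfullyFlat.nontrivial_tensorProduct_iff_left ℂ ψ).mpr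
      (FDRep.nontrivial_of_simple ψ))
  rw [FDRep.simple_iff_end_is_rank_one, finrank_eq_one_iff_of_nonzero' _ hid]
  intro T
  obtain ⟨c, hc⟩ := FDRep.exists_tensor_end_eq_smul_id N ψ χ hker T
  exact ⟨c, hc.symm⟩

/-- (Consequence of Gallagher's theorem.)  Let `F` be a finite group, `N ⊴ F`, and let
`ψ, χ` be irreducible complex representations of `F` such that `N ⊆ ker ψ` and the
restriction of `χ` to `N` is irreducible.  Then the tensor product `ψ ⊗ χ`
(whose character is the product of the characters) is irreducible. -/
theorem stmt7 (F : Type) [Group F] [Finite F] (N : Subgroup F) (hN : N.Normal)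
    (ψ χ : FDRep ℂ F) (hψ : Simple ψ) (hχ : Simple χ)
    (hker : ∀ n : F, n ∈ N → ψ.ρ n = 1)
    (hres : Simple (FDRep.of (χ.ρ.comp N.subtype))) :
    Simple (ψ ⊗ χ) :=
  stmt7_general F N ψ χ hψ hker hres
end

section
/- Let G be a finite group acting on a finite abelian group A by automorphisms, together with maps τ : G × A × A → k* and α : G × G × A → k* satisfying α(h,l;a)·α(g,hl;a) = α(gh,l;a)·α(g,h;ˡa) and τ(gh;a,b)/(τ(g;ʰa,ʰb)·τ(h;a,b)) = α(g,h;a)·α(g,h;b)/α(g,h;ab) for all g,h,l ∈ G and a,b ∈ A. Let A^G be the fixed points of the action. Then the assignment a ↦ [α_a], where α_a(g,h) = α(g,h;a), defines a group homomorphism A^G → H²(G, k*). -/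
/-! At a fixed point `a` the twisted argument `l • a` in the first identity becomes `a`, which
turns it into the 2-cocycle identity for `α_a`. At fixed points `a, b` the second identity says
that `α_a α_b / α_{ab}` is the coboundary of `g ↦ τ(g; a, b)⁻¹`. -/

theorem cocycle_identity_of_smul_eq {G A M : Type*} [Mul G] [SMul G A] [CommMagma M]
    {α : G → G → A → M}
    (hα : ∀ (g h l : G) (a : A), α h l a * α g (h * l) a = α (g * h) l a * α g h (l • a))
    {a : A} (g h : G) {l : G} (hl : l • a = a) :
    α g h a * α (g * h) l a = α h l a * α g (h * l) a := by
  rw [hα, hl, mul_comm]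

theorem mul_apply_eq_mul_apply_mul_of_smul_eq {G A M : Type*} [Mul G] [Mul A] [SMul G A]
    [CommGroup M] {τ : G → A → A → M} {α : G → G → A → M}
    (hτα : ∀ (g h : G) (a b : A),
      τ (g * h) a b * (τ g (h • a) (h • b) * τ h a b)⁻¹ =
        α g h a * α g h b * (α g h (a * b))⁻¹)
    (g : G) {h : G} {a b : A} (ha : h • a = a) (hb : h • b = b) :
    α g h a * α g h b = α g h (a * b) * (τ (g * h) a b * (τ g a b * τ h a b)⁻¹) := by
  have key := hτα g h a b
  rw [ha, hb, eq_mul_inv_iff_mul_eq] at key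
  rw [← key, mul_comm]

/-- Let a group `G` act by automorphisms on an abelian group `A`, with maps
`τ : G × A × A → k*` and `α : G × G × A → k*` (values in an abelian group `M`, e.g. the
multiplicative group of an algebraically closed field) satisfying
`α(h,l;a)·α(g,hl;a) = α(gh,l;a)·α(g,h;ˡa)` and
`τ(gh;a,b)/(τ(g;ʰa,ʰb)·τ(h;a,b)) = α(g,h;a)·α(g,h;b)/α(g,h;ab)`.
Then, writing `α_a(g,h) = α(g,h;a)`, for every fixed point `a ∈ A^G` the function `α_a`
is a 2-cocycle on `G`, and the assignment `a ↦ [α_a]` defines a group homomorphism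
`A^G → H²(G, k*)`: for fixed points `a, b`, the cocycle `α_a · α_b` differs from
`α_{ab}` by a coboundary. -/
theorem stmt10 {G A M : Type} [Group G] [CommGroup A] [CommGroup M]
    [MulDistribMulAction G A]
    (τ : G → A → A → M) (α : G → G → A → M)
    (hα : ∀ (g h l : G) (a : A),
      α h l a * α g (h * l) a = α (g * h) l a * α g h (l • a))
    (hτα : ∀ (g h : G) (a b : A),
      τ (g * h) a b * (τ g (h • a) (h • b) * τ h a b)⁻¹ =
        α g h a * α g h b * (α g h (a * b))⁻¹) :
    (∀ a : A, (∀ g : G, g • a = a) →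
      ∀ g h l : G, α g h a * α (g * h) l a = α h l a * α g (h * l) a) ∧
    (∀ a b : A, (∀ g : G, g • a = a) → (∀ g : G, g • b = b) →
      ∃ f : G → M, ∀ g h : G,
        α g h a * α g h b = α g h (a * b) * (f g * f h * (f (g * h))⁻¹)) := by
  refine ⟨fun a ha g h l => cocycle_identity_of_smul_eq hα g h (ha l),
    fun a b ha hb => ⟨fun g => (τ g a b)⁻¹, fun g h => ?_⟩⟩
  rw [mul_apply_eq_mul_apply_mul_of_smul_eq hτα g (ha h) (hb h), inv_inv, mul_inv]
  ac_rfl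
end

section
/- Let C be a fusion category graded by a finite group G with pointed neutral component C_e (all simple objects of C_e invertible), and let X be a simple object lying in a component C_g with g ≠ e. Then X ⊗ X* is isomorphic to the direct sum ⊕_{s ∈ G[X]} s over the group G[X] of invertible objects s with s ⊗ X ≅ X, and |G[X]| = (FPdim X)². -/
open scoped Classical

/-- The combinatorial data of (the Grothendieck ring of) a fusion category: a finite set
`I` of simple objects with unit `one`, duality `dual`, fusion multiplicities
`N a b c = dim Hom(c, a ⊗ b)`, and the Frobenius–Perron dimension `fpdim`, the unique
ring homomorphism of the Grothendieck ring to `ℝ` positive on the simple objects. -/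
structure FusionData (I : Type) [Fintype I] [DecidableEq I] where
  one : I
  dual : I → I
  N : I → I → I → ℕ
  fpdim : I → ℝ
  fpdim_pos : ∀ a, 0 < fpdim a
  fpdim_one : fpdim one = 1
  fpdim_mul : ∀ a b, fpdim a * fpdim b = ∑ c, (N a b c : ℝ) * fpdim c
  assoc : ∀ a b c d, ∑ e, N a b e * N e c d = ∑ e, N b c e * N a e d
  N_one_left : ∀ a b, N one a b = if a = b then 1 else 0
  N_one_right : ∀ a b, N a one b = if a = b then 1 else 0
  N_dual : ∀ a b, N a b one = if b = dual a then 1 else 0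
  frobenius : ∀ a b c, N a b c = N (dual a) c b

/-! A simple `c` occurs in `X ⊗ X*` exactly as often as `X` occurs in `c ⊗ X`. Every such `c`
has degree `deg X * (deg X)⁻¹ = e`, so it is invertible. For invertible `s`, a simple `c` in
`s ⊗ b` satisfies `N s b c · FPdim c ≤ FPdim b` and, since `b` lies in `s* ⊗ c`, also
`N s b c · FPdim b ≤ FPdim c`; hence the multiplicity is at most one. Thus
`X ⊗ X* ≅ ⊕_{s ∈ G[X]} s`, and taking Frobenius–Perron dimensions gives `FPdim X ^ 2 = |G[X]|`. -/

namespace FusionData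

variable {I : Type} [Fintype I] [DecidableEq I] (F : FusionData I)

theorem dual_involutive : Function.Involutive F.dual := by
  intro a
  have h : F.N (F.dual (F.dual a)) F.one a = F.N a F.one a := by
    rw [F.frobenius a, F.frobenius (F.dual a)]
  by_contra hne
  simp [F.N_one_right, hne] at h

theorem N_dual_cyclic (a b c : I) : F.N a b (F.dual c) = F.N b c (F.dual a) := by
  have h := F.assoc a b c F.one
  have hdual : ∀ e, F.N e c F.one = if e = F.dual c then 1 else 0 := fun e => by
    rw [F.N_dual]
    exact if_congr ⟨fun h => by rw [h, F.dual_involutive], fun h => by rw [h, F.dual_involutive]⟩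
      rfl rfl
  simp only [hdual, F.N_dual, mul_ite, mul_one, mul_zero, Finset.sum_ite_eq', Finset.mem_univ,
    if_true] at h
  exact h

theorem N_dual_right (a b c : I) : F.N a (F.dual b) c = F.N c b a := by
  have h := F.N_dual_cyclic (F.dual c) a (F.dual b)
  rw [F.dual_involutive, F.dual_involutive] at h
  rw [← h, F.frobenius, F.dual_involutive]

theorem fpdim_mul_sum_sq (a : I) :
    F.fpdim a * ∑ b, F.fpdim b ^ 2 = ∑ b, ∑ c, (F.N a b c : ℝ) * F.fpdim b * F.fpdim c := by
  rw [Finset.mul_sum]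
  refine Finset.sum_congr rfl fun b _ => ?_
  rw [sq, ← mul_assoc, F.fpdim_mul, Finset.sum_mul]
  exact Finset.sum_congr rfl fun c _ => by ring

/-- Frobenius reciprocity makes left multiplication by `a` and by `a*` transpose to each other,
and `(FPdim b)_b` is an eigenvector of both, with eigenvalues `FPdim a` and `FPdim a*`. -/
theorem fpdim_dual (a : I) : F.fpdim (F.dual a) = F.fpdim a := by
  have hpos : (0 : ℝ) < ∑ b, F.fpdim b ^ 2 :=
    Finset.sum_pos (fun b _ => pow_pos (F.fpdim_pos b) 2) ⟨F.one, Finset.mem_univ _⟩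
  refine mul_right_cancel₀ hpos.ne' ?_
  rw [fpdim_mul_sum_sq, fpdim_mul_sum_sq, Finset.sum_comm]
  refine Finset.sum_congr rfl fun b _ => Finset.sum_congr rfl fun c _ => ?_
  rw [← F.frobenius]
  ring

theorem N_mul_fpdim_le (a b c : I) : (F.N a b c : ℝ) * F.fpdim c ≤ F.fpdim a * F.fpdim b := by
  rw [F.fpdim_mul]
  exact Finset.single_le_sum (f := fun d => (F.N a b d : ℝ) * F.fpdim d)
    (fun d _ => mul_nonneg (Nat.cast_nonneg _) (F.fpdim_pos d).le) (Finset.mem_univ c)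

theorem N_le_one_of_fpdim_eq_one {s : I} (hs : F.fpdim s = 1) (b c : I) : F.N s b c ≤ 1 := by
  have hc : (F.N s b c : ℝ) * F.fpdim c ≤ F.fpdim b := by
    simpa [hs] using F.N_mul_fpdim_le s b c
  have hb : (F.N s b c : ℝ) * F.fpdim b ≤ F.fpdim c := by
    simpa [F.fpdim_dual, hs, ← F.frobenius] using F.N_mul_fpdim_le (F.dual s) c b
  have hprod : (F.N s b c : ℝ) ^ 2 * (F.fpdim b * F.fpdim c) ≤ 1 * (F.fpdim b * F.fpdim c) := by
    nlinarith [mul_le_mul hc hb (mul_nonneg (Nat.cast_nonneg _) (F.fpdim_pos b).le)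
      (F.fpdim_pos b).le]
  have hsq : (F.N s b c : ℝ) ^ 2 ≤ 1 :=
    le_of_mul_le_mul_right hprod (mul_pos (F.fpdim_pos b) (F.fpdim_pos c))
  exact_mod_cast (sq_le_one_iff₀ (Nat.cast_nonneg _)).mp hsq

theorem N_mul_dual_eq_ite {X : I} (hinv : ∀ c, F.N X (F.dual X) c ≠ 0 → F.fpdim c = 1) (c : I) :
    F.N X (F.dual X) c = if (F.fpdim c = 1 ∧ 1 ≤ F.N c X X) then 1 else 0 := by
  rw [F.N_dual_right]
  by_cases hc : F.N c X X = 0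
  · simp [hc]
  · have hfp : F.fpdim c = 1 := hinv c (by rwa [F.N_dual_right])
    have := F.N_le_one_of_fpdim_eq_one hfp X X
    rw [if_pos ⟨hfp, by omega⟩]
    omega

theorem fpdim_sq_eq_card {X : I}
    (h : ∀ c, F.N X (F.dual X) c = if (F.fpdim c = 1 ∧ 1 ≤ F.N c X X) then 1 else 0) :
    (Nat.card {s : I // F.fpdim s = 1 ∧ 1 ≤ F.N s X X} : ℝ) = F.fpdim X ^ 2 := by
  have hsum : F.fpdim X ^ 2 = ∑ c, (F.N X (F.dual X) c : ℝ) * F.fpdim c := by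
    rw [sq, ← F.fpdim_mul, F.fpdim_dual]
  rw [hsum, Nat.card_eq_fintype_card, Fintype.card_subtype, ← Finset.sum_boole]
  refine Finset.sum_congr rfl fun c _ => ?_
  rw [h c]
  split_ifs with hc
  · simp [hc.1]
  · simp

end FusionData

theorem stmt14_general {I : Type} [Fintype I] [DecidableEq I] (F : FusionData I)
    {G : Type} [Group G] (deg : I → G)
    (hdeg : ∀ a b c, F.N a b c ≠ 0 → deg c = deg a * deg b)
    (hdeg_dual : ∀ a, deg (F.dual a) = (deg a)⁻¹)
    (hpointed : ∀ a, deg a = 1 → F.fpdim a = 1)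
    (X : I) :
    (∀ c, F.N X (F.dual X) c =
      if (F.fpdim c = 1 ∧ 1 ≤ F.N c X X) then 1 else 0) ∧
    ((Nat.card {s : I // F.fpdim s = 1 ∧ 1 ≤ F.N s X X} : ℝ) = (F.fpdim X) ^ 2) := by
  have hinv : ∀ c, F.N X (F.dual X) c ≠ 0 → F.fpdim c = 1 := fun c hc =>
    hpointed c (by rw [hdeg X (F.dual X) c hc, hdeg_dual, mul_inv_cancel])
  have hdecomp := F.N_mul_dual_eq_ite hinv
  exact ⟨hdecomp, F.fpdim_sq_eq_card hdecomp⟩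

/-- Let `C` be a fusion category graded by a finite group `G` with pointed neutral
component (every simple of degree `e` is invertible, i.e. has `FPdim = 1`), and let `X`
be a simple object lying in a component `C_g` with `g ≠ e`.  Then
`X ⊗ X* ≅ ⊕_{s ∈ G[X]} s`, where `G[X]` is the group of invertible objects `s` with
`s ⊗ X ≅ X`, and `|G[X]| = (FPdim X)²`. -/
theorem stmt14 {I : Type} [Fintype I] [DecidableEq I] (F : FusionData I)
    {G : Type} [Group G] (deg : I → G)
    (hdeg : ∀ a b c, F.N a b c ≠ 0 → deg c = deg a * deg b)
    (hdeg_one : deg F.one = 1)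
    (hdeg_dual : ∀ a, deg (F.dual a) = (deg a)⁻¹)
    (hpointed : ∀ a, deg a = 1 → F.fpdim a = 1)
    (X : I) (hX : deg X ≠ 1) :
    (∀ c, F.N X (F.dual X) c =
      if (F.fpdim c = 1 ∧ 1 ≤ F.N c X X) then 1 else 0) ∧
    ((Nat.card {s : I // F.fpdim s = 1 ∧ 1 ≤ F.N s X X} : ℝ) = (F.fpdim X) ^ 2) :=
  stmt14_general F deg hdeg hdeg_dual hpointed X
end

section
/- Let G be a finite group, ω a 3-cocycle on G with values in k*, and for a ∈ G define α_a(x,y) = ω(a,x,y)ω(x,y,a)/ω(x,a,y) for x,y ∈ C_G(a). Then α_a is a 2-cocycle on the centralizer C_G(a). -/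
variable {G M : Type*} [Group G] [CommGroup M]

def centralizerTwist (ω : G → G → G → M) (a x y : G) : M :=
  ω a x y * ω x y a * (ω x a y)⁻¹

/- Once `a` is moved past `x`, `y`, `z`, the cocycle identity is the product of the 3-cocycle
identities at `(a,x,y,z)` and `(x,y,a,z)` divided by those at `(x,a,y,z)` and `(x,y,z,a)`. -/
theorem centralizerTwist_cocycle {ω : G → G → G → M}
    (hω : ∀ a b c d : G, ω b c d * ω a (b * c) d * ω a b c = ω (a * b) c d * ω a b (c * d))
    {a x y z : G} (hx : Commute a x) (hy : Commute a y) (hz : Commute a z) :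
    centralizerTwist ω a x y * centralizerTwist ω a (x * y) z =
      centralizerTwist ω a y z * centralizerTwist ω a x (y * z) := by
  have h₁ := hω a x y z
  have h₂ := hω x a y z
  have h₃ := hω x y a z
  have h₄ := hω x y z a
  rw [hx.eq] at h₁
  rw [hy.eq] at h₂
  rw [hz.eq] at h₃
  apply_fun Additive.ofMul at h₁ h₂ h₃ h₄ ⊢
  simp only [centralizerTwist, ofMul_mul, ofMul_inv] at h₁ h₂ h₃ h₄ ⊢
  linear_combination (norm := abel) h₁ + h₃ - h₂ - h₄

theorem stmt16_general {G : Type} [Group G] {k : Type} [Field k]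
    (ω : G → G → G → kˣ)
    (hω : ∀ a b c d : G,
      ω b c d * ω a (b * c) d * ω a b c = ω (a * b) c d * ω a b (c * d))
    (a : G) :
    ∀ x y z : G, x ∈ Subgroup.centralizer {a} → y ∈ Subgroup.centralizer {a} →
      z ∈ Subgroup.centralizer {a} →
      (ω a x y * ω x y a * (ω x a y)⁻¹) *
          (ω a (x * y) z * ω (x * y) z a * (ω (x * y) a z)⁻¹) =
        (ω a y z * ω y z a * (ω y a z)⁻¹) *
          (ω a x (y * z) * ω x (y * z) a * (ω x a (y * z))⁻¹) := by
  intro x y z hx hy hz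
  rw [Subgroup.mem_centralizer_singleton_iff] at hx hy hz
  exact centralizerTwist_cocycle hω hx.symm hy.symm hz.symm

/-- Let `G` be a finite group and `ω` a (normalized) 3-cocycle on `G` with values in
`k*`, `k` an algebraically closed field of characteristic zero.  For `a ∈ G` define
`α_a(x,y) = ω(a,x,y)·ω(x,y,a)·ω(x,a,y)⁻¹`.  Then `α_a` is a 2-cocycle on the
centralizer `C_G(a)`:
`α_a(x,y)·α_a(xy,z) = α_a(y,z)·α_a(x,yz)` for all `x, y, z ∈ C_G(a)`. -/
theorem stmt16 {G : Type} [Group G] {k : Type} [Field k] [IsAlgClosed k] [CharZero k]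
    (ω : G → G → G → kˣ)
    (hω : ∀ a b c d : G,
      ω b c d * ω a (b * c) d * ω a b c = ω (a * b) c d * ω a b (c * d))
    (hnorm : ∀ a b : G, ω 1 a b = 1 ∧ ω a 1 b = 1 ∧ ω a b 1 = 1)
    (a : G) :
    ∀ x y z : G, x ∈ Subgroup.centralizer {a} → y ∈ Subgroup.centralizer {a} →
      z ∈ Subgroup.centralizer {a} →
      (ω a x y * ω x y a * (ω x a y)⁻¹) *
          (ω a (x * y) z * ω (x * y) z a * (ω (x * y) a z)⁻¹) =
        (ω a y z * ω y z a * (ω y a z)⁻¹) *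
          (ω a x (y * z) * ω x (y * z) a * (ω x a (y * z))⁻¹) :=
  stmt16_general ω hω a
end
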